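/- Let d ≥ 2, let E : Fin d → ℝ be not all equal, and let p : Fin d → ℝ satisfy p_j > 0 for all j and Σ_j p_j = 1. Assume that for every T > 0 it is not the case that p_j = exp(−E_j/T)/Σ_l exp(−E_l/T) for all j, and that p is not the uniform distribution. Then there exist l, l̃ ∈ ℕ^d with Σ_j l_j = Σ_j l̃_j such that Π_j p_j^{l_j} > Π_j p_j^{l̃_j} and Σ_j l_j E_j > Σ_j l̃_j E_j. -/

import Mathlib

/-!
With `q = log p`, the two inequalities ask for an integer vector `z` with `∑ z = 0`,
`z ⬝ q > 0` and `z ⬝ E > 0`. On the hyperplane `∑ z = 0` these functionals are the inner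
products with the centred vectors `u` of `q` and `v` of `E`, and `‖v‖ • u + ‖u‖ • v` pairs
positively with both unless it vanishes, i.e. unless `q + c E` is constant for some `c ≥ 0`:
then `p` is uniform (`c = 0`) or the Gibbs distribution at `T = 1 / c`. Scaling and rounding
this real vector gives an integer one, and its positive and negative parts are `l` and `l̃`.
-/

open Finset

theorem inner_pos_of_norm_smul_add_norm_smul_ne_zero {F : Type*} [NormedAddCommGroup F]
    [InnerProductSpace ℝ F] {u v : F}
    (h : ‖v‖ • u + ‖u‖ • v ≠ 0) :
    0 < inner ℝ (‖v‖ • u + ‖u‖ • v) u ∧ 0 < inner ℝ (‖v‖ • u + ‖u‖ • v) v := by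
  set s := ‖u‖ * ‖v‖ + inner ℝ u v
  have hs : 0 ≤ s := by linarith [neg_abs_le (inner ℝ u v), abs_real_inner_le_norm u v]
  have hwu : inner ℝ (‖v‖ • u + ‖u‖ • v) u = ‖u‖ * s := by
    rw [inner_add_left, real_inner_smul_left, real_inner_smul_left, real_inner_self_eq_norm_sq,
      real_inner_comm]
    ring
  have hwv : inner ℝ (‖v‖ • u + ‖u‖ • v) v = ‖v‖ * s := by
    rw [inner_add_left, real_inner_smul_left, real_inner_smul_left, real_inner_self_eq_norm_sq]
    ring
  -- `‖w‖ ^ 2 = 2 ‖u‖ ‖v‖ s > 0` forces `‖u‖, ‖v‖, s > 0`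
  have hw : 0 < ‖‖v‖ • u + ‖u‖ • v‖ ^ 2 := by positivity
  rw [← real_inner_self_eq_norm_sq, inner_add_right, real_inner_smul_right,
    real_inner_smul_right, hwu, hwv] at hw
  constructor <;> nlinarith [norm_nonneg u, norm_nonneg v]

section

variable {ι : Type*} [Fintype ι]

noncomputable def centered (f : ι → ℝ) : ι → ℝ := fun j => f j - (∑ i, f i) / Fintype.card ι

theorem sum_mul_centered (z f : ι → ℝ) :
    ∑ j, z j * centered f j = ∑ j, z j * f j - (∑ j, z j) * (∑ j, f j) / Fintype.card ι := by
  simp only [centered, mul_sub, sum_sub_distrib, ← sum_mul, mul_div_assoc]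

theorem exists_sum_mul_centered_pos {q E : ι → ℝ} (hE : ∃ i j, E i ≠ E j)
    (hqE : ∀ c : ℝ, 0 ≤ c → ∀ K, ¬ ∀ j, q j + c * E j = K) :
    ∃ m : ι → ℝ, 0 < ∑ j, m j * centered q j ∧ 0 < ∑ j, m j * centered E j := by
  set u : EuclideanSpace ℝ ι := WithLp.toLp 2 (centered q)
  set v : EuclideanSpace ℝ ι := WithLp.toLp 2 (centered E)
  have inner_eq (m : EuclideanSpace ℝ ι) (f : ι → ℝ) :
      inner ℝ m (WithLp.toLp 2 f) = ∑ j, m j * f j := by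
    simp [PiLp.inner_apply, mul_comm]
  by_cases hw : ‖v‖ • u + ‖u‖ • v = 0
  · have hv : ‖v‖ ≠ 0 := by
      obtain ⟨i, j, hij⟩ := hE
      refine norm_ne_zero_iff.2 fun hv => hij ?_
      have hc : ∀ k, centered E k = 0 := fun k => congrArg (· k) hv
      simp only [centered, sub_eq_zero] at hc
      rw [hc i, hc j]
    refine absurd (fun j => ?_) (hqE (‖u‖ / ‖v‖) (by positivity)
      ((∑ i, q i) / Fintype.card ι + ‖u‖ / ‖v‖ * ((∑ i, E i) / Fintype.card ι)))
    have hj : ‖v‖ * centered q j + ‖u‖ * centered E j = 0 := congrArg (· j) hw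
    have hj' : centered q j + ‖u‖ / ‖v‖ * centered E j = 0 := by
      field_simp
      linarith
    simp only [centered] at hj'
    linarith
  · obtain ⟨hu, hv⟩ := inner_pos_of_norm_smul_add_norm_smul_ne_zero hw
    exact ⟨WithLp.ofLp (‖v‖ • u + ‖u‖ • v), by rwa [← inner_eq], by rwa [← inner_eq]⟩

theorem sum_floor_mul_pos {m f : ι → ℝ} {N : ℝ} (h : ∑ j, |f j| < N * ∑ j, m j * f j) :
    0 < ∑ j, (⌊N * m j⌋ : ℝ) * f j := by
  have hterm : ∀ j, N * m j * f j - |f j| ≤ ⌊N * m j⌋ * f j := by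
    intro j
    have hfract : Int.fract (N * m j) * f j ≤ |f j| :=
      (mul_le_mul_of_nonneg_left (le_abs_self _) (Int.fract_nonneg _)).trans
        (mul_le_of_le_one_left (abs_nonneg _) (Int.fract_lt_one _).le)
    rw [← Int.self_sub_fract]
    linarith
  calc 0 < N * ∑ j, m j * f j - ∑ j, |f j| := sub_pos.2 h
    _ = ∑ j, (N * m j * f j - |f j|) := by rw [sum_sub_distrib, mul_sum]; simp only [mul_assoc]
    _ ≤ _ := sum_le_sum fun j _ => hterm j

theorem exists_int_sum_mul_pos {m f g : ι → ℝ} (hf : 0 < ∑ j, m j * f j)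
    (hg : 0 < ∑ j, m j * g j) :
    ∃ z : ι → ℤ, 0 < ∑ j, (z j : ℝ) * f j ∧ 0 < ∑ j, (z j : ℝ) * g j := by
  obtain ⟨N, hNf, hNg⟩ :=
    (((Filter.tendsto_id.atTop_mul_const hf).eventually_gt_atTop (∑ j, |f j|)).and
      ((Filter.tendsto_id.atTop_mul_const hg).eventually_gt_atTop (∑ j, |g j|))).exists
  exact ⟨fun j => ⌊N * m j⌋, by exact_mod_cast sum_floor_mul_pos hNf,
    by exact_mod_cast sum_floor_mul_pos hNg⟩

theorem exists_int_sum_eq_zero_sum_mul_pos {q E : ι → ℝ} (hE : ∃ i j, E i ≠ E j)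
    (hqE : ∀ c : ℝ, 0 ≤ c → ∀ K, ¬ ∀ j, q j + c * E j = K) :
    ∃ z : ι → ℤ, ∑ j, z j = 0 ∧ 0 < ∑ j, (z j : ℝ) * q j ∧ 0 < ∑ j, (z j : ℝ) * E j := by
  obtain ⟨m, hmq, hmE⟩ := exists_sum_mul_centered_pos hE hqE
  obtain ⟨z, hzq, hzE⟩ := exists_int_sum_mul_pos hmq hmE
  have hcard : (0 : ℝ) < Fintype.card ι := by
    obtain ⟨i, -⟩ := hE
    exact_mod_cast Fintype.card_pos_iff.2 ⟨i⟩
  have hbalance (f : ι → ℝ) :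
      ∑ j, ((Fintype.card ι * z j - ∑ i, z i : ℤ) : ℝ) * f j =
        Fintype.card ι * ∑ j, (z j : ℝ) * centered f j := by
    rw [sum_mul_centered, mul_sub, mul_div_cancel₀ _ hcard.ne']
    push_cast
    simp only [sub_mul, sum_sub_distrib, mul_assoc, ← mul_sum]
  refine ⟨fun j => Fintype.card ι * z j - ∑ i, z i, ?_, ?_, ?_⟩
  · simp [sum_sub_distrib, mul_sum]
  · rw [hbalance]; positivity
  · rw [hbalance]; positivity

theorem exists_nat_sub_eq_of_sum_eq_zero {z : ι → ℤ} (hz : ∑ j, z j = 0) :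
    ∃ l l' : ι → ℕ, ∑ j, l j = ∑ j, l' j ∧
      ∀ f : ι → ℝ, ∑ j, (l j : ℝ) * f j - ∑ j, (l' j : ℝ) * f j = ∑ j, (z j : ℝ) * f j := by
  have hsplit : ∀ j, ((z j).toNat : ℤ) - (-z j).toNat = z j := fun j => Int.toNat_sub_toNat_neg _
  refine ⟨fun j => (z j).toNat, fun j => (-z j).toNat, ?_, fun f => ?_⟩
  · have : ∑ j, ((z j).toNat : ℤ) = ∑ j, ((-z j).toNat : ℤ) := by
      rw [← sub_eq_zero, ← sum_sub_distrib, ← hz]; exact sum_congr rfl fun j _ => hsplit j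
    exact_mod_cast this
  · rw [← sum_sub_distrib]
    refine sum_congr rfl fun j _ => ?_
    rw [← sub_mul, ← hsplit j]
    push_cast; ring

theorem prod_pow_lt_prod_pow_iff {p : ι → ℝ} (hp : ∀ j, 0 < p j) (l l' : ι → ℕ) :
    ∏ j, p j ^ l' j < ∏ j, p j ^ l j ↔
      ∑ j, (l' j : ℝ) * Real.log (p j) < ∑ j, (l j : ℝ) * Real.log (p j) := by
  rw [← Real.log_lt_log_iff (prod_pos fun j _ => pow_pos (hp j) _)
    (prod_pos fun j _ => pow_pos (hp j) _), Real.log_prod fun j _ => (pow_pos (hp j) _).ne',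
    Real.log_prod fun j _ => (pow_pos (hp j) _).ne']
  simp only [Real.log_pow]

theorem eq_exp_div_sum_exp {p g : ι → ℝ} {K : ℝ} (hsum : ∑ j, p j = 1)
    (hp : ∀ j, p j = K * Real.exp (g j)) (j : ι) :
    p j = Real.exp (g j) / ∑ l, Real.exp (g l) := by
  have hK : K * ∑ l, Real.exp (g l) = 1 := by
    rw [mul_sum, ← hsum]
    exact sum_congr rfl fun l _ => (hp l).symm
  rw [hp j, eq_div_iff (right_ne_zero_of_mul_eq_one hK), mul_right_comm, hK, one_mul]

end

theorem stmt_1 (d : ℕ) (E p : Fin d → ℝ)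
    (hE : ¬ ∀ i j : Fin d, E i = E j)
    (hp_pos : ∀ j, 0 < p j) (hp_sum : ∑ j, p j = 1)
    (hGibbs : ∀ T : ℝ, 0 < T →
      ¬ ∀ j, p j = Real.exp (-(E j) / T) / ∑ l, Real.exp (-(E l) / T))
    (hunif : ¬ ∀ j, p j = 1 / d) :
    ∃ l ltil : Fin d → ℕ,
      (∑ j, l j) = (∑ j, ltil j) ∧
      (∏ j, p j ^ ltil j) < (∏ j, p j ^ l j) ∧
      (∑ j, (ltil j : ℝ) * E j) < (∑ j, (l j : ℝ) * E j) := by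
  have hlin : ∀ c : ℝ, 0 ≤ c → ∀ K, ¬ ∀ j, Real.log (p j) + c * E j = K := by
    intro c hc K hK
    have hp : ∀ j, p j = Real.exp K * Real.exp (-c * E j) := fun j => by
      rw [← Real.exp_add, ← Real.exp_log (hp_pos j)]
      congr 1
      linarith [hK j]
    have hsoftmax := eq_exp_div_sum_exp hp_sum hp
    rcases hc.eq_or_lt with rfl | hc
    · exact hunif fun j => by simp [hsoftmax j]
    · refine hGibbs c⁻¹ (inv_pos.2 hc) fun j => ?_
      have hT (x : ℝ) : -x / c⁻¹ = -c * x := by rw [div_inv_eq_mul]; ring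
      simp only [hsoftmax j, hT]
  push Not at hE
  obtain ⟨z, hz, hzq, hzE⟩ := exists_int_sum_eq_zero_sum_mul_pos hE hlin
  obtain ⟨l, ltil, hsum, hdiff⟩ := exists_nat_sub_eq_of_sum_eq_zero hz
  refine ⟨l, ltil, hsum, (prod_pow_lt_prod_pow_iff hp_pos l ltil).2 ?_, ?_⟩ <;>
    rw [← sub_pos, hdiff] <;> assumption
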